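/- arXiv:1901.03827 — 3 statements merged into one kernel-verified Lean document; each statement's English description precedes it below -/
import Mathlib

section
/- Let p > 2 and p' = p/(p-1), and define u : ℝ^d → ℝ by u(x) = |x|^{p'}. Then u is continuously differentiable, its gradient satisfies |∇u(x) − ∇u(0)| = p' |x|^{1/(p-1)} for every x, so ∇u is Hölder continuous with exponent 1/(p-1) on every bounded set; moreover, for every α with 1/(p-1) < α ≤ 1 and every r > 0, sup_{x ∈ B_r, x ≠ 0} |∇u(x) − ∇u(0)| / |x|^α = +∞, i.e. ∇u is not α-Hölder continuous on any neighborhood of the origin. Hence the exponent 1/(p-1) in the C^{p'}-regularity theorem is optimal. -/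
/-!
With `s = p' - 1 = 1/(p-1) ∈ (0, 1)`, the gradient of `u = |x|^{p'}` is `∇u(x) = p' |x|^{s-1} x`,
so `|∇u(x) - ∇u(0)| = p' |x|^s`: this is `s`-Hölder at the origin and no better.
The global `s`-Hölder bound `‖|x|^{s-1} x - |y|^{s-1} y‖ ≤ 2 |x - y|^s` for `|y| ≤ |x|` is trivial
when `|x - y| ≥ |x|`; otherwise write the difference as
`|x|^{s-1} (x - y) + (|x|^{s-1} - |y|^{s-1}) y`, and after scaling by `|x|` the second term
reduces to the scalar inequality `t^s - t ≤ (1 - t)^s` on `[0, 1]`.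
-/

open Metric Real

noncomputable section

/-- The model function `u(x) = |x|^{p'}` on `ℝ^d`, with `p' = p/(p-1)`. -/
def modelFun (d : ℕ) (p : ℝ) (x : EuclideanSpace ℝ (Fin d)) : ℝ :=
  ‖x‖ ^ (p / (p - 1))

open Filter Topology

section Scalar

variable {s : ℝ}

lemma rpow_sub_self_le_one_sub_rpow (hs0 : 0 < s) (hs1 : s ≤ 1) {t : ℝ} (ht0 : 0 ≤ t)
    (ht1 : t ≤ 1) : t ^ s - t ≤ (1 - t) ^ s := by
  calc t ^ s - t ≤ 1 - t := by linarith [rpow_le_one ht0 ht1 hs0.le]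
    _ ≤ (1 - t) ^ s := self_le_rpow_of_le_one (sub_nonneg.2 ht1) (by linarith) hs1

lemma abs_rpow_sub_one_sub_mul_le (hs0 : 0 < s) (hs1 : s ≤ 1) {a b : ℝ} (hb : 0 ≤ b)
    (hba : b ≤ a) : |a ^ (s - 1) - b ^ (s - 1)| * b ≤ (a - b) ^ s := by
  rcases hb.eq_or_lt with rfl | hb
  · simpa using rpow_nonneg hba s
  have ha : 0 < a := hb.trans_le hba
  have habs : |a ^ (s - 1) - b ^ (s - 1)| = b ^ (s - 1) - a ^ (s - 1) := by
    rw [abs_sub_comm, abs_of_nonneg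
      (sub_nonneg.2 (rpow_le_rpow_of_nonpos hb hba (by linarith)))]
  set t := b / a
  have hbt : b = a * t := (mul_div_cancel₀ b ha.ne').symm
  have ht0 : 0 ≤ t := div_nonneg hb.le ha.le
  have ht1 : t ≤ 1 := (div_le_one ha).2 hba
  have hlhs : (b ^ (s - 1) - a ^ (s - 1)) * b = a ^ s * (t ^ s - t) := by
    rw [sub_mul, ← rpow_add_one hb.ne', sub_add_cancel, hbt, mul_rpow ha.le ht0,
      ← mul_assoc, ← rpow_add_one ha.ne', sub_add_cancel]
    ring
  have hrhs : (a - b) ^ s = a ^ s * (1 - t) ^ s := by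
    rw [hbt, ← mul_one_sub, mul_rpow ha.le (by linarith)]
  rw [habs, hlhs, hrhs]
  exact mul_le_mul_of_nonneg_left (rpow_sub_self_le_one_sub_rpow hs0 hs1 ht0 ht1)
    (rpow_nonneg ha.le s)

end Scalar

section NormedSpace

variable {E : Type*} [NormedAddCommGroup E] [NormedSpace ℝ E] {s : ℝ}

lemma norm_rpow_sub_one_smul (hs0 : 0 < s) (x : E) : ‖(‖x‖ ^ (s - 1)) • x‖ = ‖x‖ ^ s := by
  rw [norm_smul, norm_of_nonneg (rpow_nonneg (norm_nonneg x) _)]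
  rcases (norm_nonneg x).eq_or_lt with h | h
  · rw [← h, mul_zero, zero_rpow hs0.ne']
  · rw [← rpow_add_one h.ne', sub_add_cancel]

lemma norm_rpow_sub_one_smul_sub_le_of_le (hs0 : 0 < s) (hs1 : s ≤ 1) {x y : E}
    (hyx : ‖y‖ ≤ ‖x‖) : ‖(‖x‖ ^ (s - 1)) • x - (‖y‖ ^ (s - 1)) • y‖ ≤ 2 * ‖x - y‖ ^ s := by
  by_cases hxy : x = y
  · rw [hxy, sub_self, sub_self, norm_zero]
    positivity
  rcases le_or_gt ‖x‖ ‖x - y‖ with hfar | hnear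
  · calc ‖(‖x‖ ^ (s - 1)) • x - (‖y‖ ^ (s - 1)) • y‖
        ≤ ‖x‖ ^ s + ‖y‖ ^ s := by
          simpa only [norm_rpow_sub_one_smul hs0] using
            norm_sub_le ((‖x‖ ^ (s - 1)) • x) ((‖y‖ ^ (s - 1)) • y)
      _ ≤ ‖x - y‖ ^ s + ‖x - y‖ ^ s := by
          gcongr
          exact hyx.trans hfar
      _ = 2 * ‖x - y‖ ^ s := by ring
  replace hxy : 0 < ‖x - y‖ := norm_pos_iff.2 (sub_ne_zero.2 hxy)
  have hsplit : (‖x‖ ^ (s - 1)) • x - (‖y‖ ^ (s - 1)) • y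
      = (‖x‖ ^ (s - 1)) • (x - y) + (‖x‖ ^ (s - 1) - ‖y‖ ^ (s - 1)) • y := by
    rw [smul_sub, sub_smul]; abel
  have hfirst : ‖(‖x‖ ^ (s - 1)) • (x - y)‖ ≤ ‖x - y‖ ^ s := by
    rw [norm_smul, norm_of_nonneg (rpow_nonneg (norm_nonneg x) _)]
    calc ‖x‖ ^ (s - 1) * ‖x - y‖ ≤ ‖x - y‖ ^ (s - 1) * ‖x - y‖ :=
          mul_le_mul_of_nonneg_right (rpow_le_rpow_of_nonpos hxy hnear.le (by linarith))
            (norm_nonneg _)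
      _ = ‖x - y‖ ^ s := by rw [← rpow_add_one hxy.ne', sub_add_cancel]
  have hsecond : ‖(‖x‖ ^ (s - 1) - ‖y‖ ^ (s - 1)) • y‖ ≤ ‖x - y‖ ^ s := by
    rw [norm_smul, norm_eq_abs]
    exact (abs_rpow_sub_one_sub_mul_le hs0 hs1 (norm_nonneg y) hyx).trans
      (rpow_le_rpow (sub_nonneg.2 hyx) (norm_sub_norm_le x y) hs0.le)
  calc ‖(‖x‖ ^ (s - 1)) • x - (‖y‖ ^ (s - 1)) • y‖
      ≤ ‖(‖x‖ ^ (s - 1)) • (x - y)‖ + ‖(‖x‖ ^ (s - 1) - ‖y‖ ^ (s - 1)) • y‖ := by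
        rw [hsplit]; exact norm_add_le _ _
    _ ≤ ‖x - y‖ ^ s + ‖x - y‖ ^ s := add_le_add hfirst hsecond
    _ = 2 * ‖x - y‖ ^ s := by ring

lemma norm_rpow_sub_one_smul_sub_le (hs0 : 0 < s) (hs1 : s ≤ 1) (x y : E) :
    ‖(‖x‖ ^ (s - 1)) • x - (‖y‖ ^ (s - 1)) • y‖ ≤ 2 * ‖x - y‖ ^ s := by
  rcases le_total ‖y‖ ‖x‖ with hyx | hxy
  · exact norm_rpow_sub_one_smul_sub_le_of_le hs0 hs1 hyx
  · rw [norm_sub_rev, norm_sub_rev x]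
    exact norm_rpow_sub_one_smul_sub_le_of_le hs0 hs1 hxy

lemma not_exists_mul_rpow_le_mul_rpow [Nontrivial E] {α c r : ℝ} (hc : 0 < c) (hsα : s < α)
    (hr : 0 < r) : ¬∃ C : ℝ, ∀ x ∈ ball (0 : E) r, x ≠ 0 → c * ‖x‖ ^ s ≤ C * ‖x‖ ^ α := by
  rintro ⟨C, hC⟩
  have hsmall : ∀ᶠ t in 𝓝[>] (0 : ℝ), c ≤ C * t ^ (α - s) := by
    filter_upwards [Ioo_mem_nhdsGT hr] with t ⟨ht0, htr⟩
    obtain ⟨x, hx⟩ := exists_norm_eq E ht0.le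
    have hbound := hC x (by simpa [hx] using htr) (norm_pos_iff.1 (hx ▸ ht0))
    rw [hx, show α = (α - s) + s by ring, rpow_add ht0, ← mul_assoc] at hbound
    exact le_of_mul_le_mul_right hbound (rpow_pos_of_pos ht0 s)
  have hlim : Tendsto (fun t : ℝ => C * t ^ (α - s)) (𝓝[>] 0) (𝓝 0) := by
    have := ((continuousAt_rpow_const 0 (α - s) (Or.inr (by linarith))).tendsto.const_mul
      C).mono_left (nhdsWithin_le_nhds (s := Set.Ioi 0))
    simpa [zero_rpow (sub_pos.2 hsα).ne'] using this
  exact (ge_of_tendsto hlim hsmall).not_gt hc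

end NormedSpace

section InnerProductSpace

variable {E : Type*} [NormedAddCommGroup E] [InnerProductSpace ℝ E] [CompleteSpace E] {q : ℝ}

lemma gradient_norm_rpow (hq : 1 < q) (x : E) :
    gradient (fun x : E => ‖x‖ ^ q) x = (q * ‖x‖ ^ (q - 2)) • x := by
  refine HasGradientAt.gradient ((hasGradientAt_iff_hasFDerivAt).2 ?_)
  convert hasFDerivAt_norm_rpow x hq using 1 <;> ext <;> simp

lemma gradient_norm_rpow_eq_smul (hq : 1 < q) (x : E) :
    gradient (fun x : E => ‖x‖ ^ q) x = q • (‖x‖ ^ ((q - 1) - 1)) • x := by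
  rw [gradient_norm_rpow hq, smul_smul, sub_sub, one_add_one_eq_two]

lemma norm_gradient_norm_rpow (hq : 1 < q) (x : E) :
    ‖gradient (fun x : E => ‖x‖ ^ q) x‖ = q * ‖x‖ ^ (q - 1) := by
  rw [gradient_norm_rpow_eq_smul hq, norm_smul, norm_rpow_sub_one_smul (by linarith),
    norm_of_nonneg (by linarith)]

lemma norm_gradient_norm_rpow_sub_le (hq : 1 < q) (hq2 : q ≤ 2) (x y : E) :
    ‖gradient (fun x : E => ‖x‖ ^ q) x - gradient (fun x : E => ‖x‖ ^ q) y‖ ≤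
      2 * q * ‖x - y‖ ^ (q - 1) := by
  rw [gradient_norm_rpow_eq_smul hq, gradient_norm_rpow_eq_smul hq, ← smul_sub, norm_smul,
    norm_of_nonneg (by linarith), mul_comm 2, mul_assoc]
  gcongr
  exact norm_rpow_sub_one_smul_sub_le (by linarith) (by linarith) x y

end InnerProductSpace

/-- **Optimality of the exponent `1/(p-1)`** (Section 1).
Let `p > 2`, `p' = p/(p-1)` and `u(x) = |x|^{p'}` on `ℝ^d`.  Then `u` is
continuously differentiable, `|∇u(x) - ∇u(0)| = p' |x|^{1/(p-1)}` for every
`x`, so `∇u` is `1/(p-1)`-Hölder continuous on every bounded set; moreover, for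
every `α ∈ (1/(p-1), 1]` and every `r > 0`, `∇u` fails to be `α`-Hölder
continuous near the origin:
`sup_{x ∈ B_r, x ≠ 0} |∇u(x) - ∇u(0)|/|x|^α = +∞`. -/
theorem model_function_optimality (p : ℝ) (hp : 2 < p) (d : ℕ) (hd : 1 ≤ d) :
    ContDiff ℝ 1 (modelFun d p) ∧
    (∀ x : EuclideanSpace ℝ (Fin d),
      ‖gradient (modelFun d p) x - gradient (modelFun d p) 0‖ =
        (p / (p - 1)) * ‖x‖ ^ (1 / (p - 1))) ∧
    (∀ A : Set (EuclideanSpace ℝ (Fin d)), Bornology.IsBounded A →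
      ∃ C : ℝ, ∀ x ∈ A, ∀ y ∈ A,
        ‖gradient (modelFun d p) x - gradient (modelFun d p) y‖ ≤
          C * ‖x - y‖ ^ (1 / (p - 1))) ∧
    (∀ α : ℝ, 1 / (p - 1) < α → α ≤ 1 → ∀ r : ℝ, 0 < r →
      ¬∃ C : ℝ, ∀ x ∈ ball (0 : EuclideanSpace ℝ (Fin d)) r, x ≠ 0 →
        ‖gradient (modelFun d p) x - gradient (modelFun d p) 0‖ ≤ C * ‖x‖ ^ α) := by
  have hp1 : 0 < p - 1 := by linarith
  have hq : 1 < p / (p - 1) := by rw [one_lt_div hp1]; linarith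
  have hq2 : p / (p - 1) ≤ 2 := by rw [div_le_iff₀ hp1]; linarith
  have hqs : p / (p - 1) - 1 = 1 / (p - 1) := by field_simp; ring
  have hu : modelFun d p = fun x => ‖x‖ ^ (p / (p - 1)) := rfl
  have hnorm : ∀ x : EuclideanSpace ℝ (Fin d),
      ‖gradient (modelFun d p) x - gradient (modelFun d p) 0‖ =
        (p / (p - 1)) * ‖x‖ ^ (1 / (p - 1)) := by
    intro x
    rw [hu, gradient_norm_rpow hq 0, smul_zero, sub_zero, norm_gradient_norm_rpow hq, hqs]
  refine ⟨contDiff_norm_rpow hq, hnorm, fun A _ => ⟨2 * (p / (p - 1)), fun x _ y _ => ?_⟩,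
    fun α hα _ r hr => ?_⟩
  · rw [hu, ← hqs]
    exact norm_gradient_norm_rpow_sub_le hq hq2 x y
  · have : Nonempty (Fin d) := ⟨⟨0, hd⟩⟩
    simp_rw [hnorm]
    exact not_exists_mul_rpow_le_mul_rpow (by linarith) hα hr
end
end

section
/- Let p > 2, let U ⊂ ℝ² be open, let u : U → ℝ be twice differentiable at x_0 ∈ U with ∇u(x_0) ≠ 0, and suppose u is classically p-harmonic at x_0, i.e. Δu(x_0) + (p-2) ⟨D²u(x_0) ∇u(x_0), ∇u(x_0)⟩ / |∇u(x_0)|² = 0. Identify ℝ² with ℂ via z = x + iy and let φ := ∂u/∂z = (u_x − i u_y)/2 be the complex gradient, with Wirtinger derivatives φ_z = (φ_x − i φ_y)/2 and φ_{z̄} = (φ_x + i φ_y)/2 (here φ_x, φ_y are partial derivatives of φ : U → ℂ). Then at x_0, φ(x_0) ≠ 0 and φ_{z̄}(x_0) = (1/p − 1/2) [ (conj(φ)/φ) φ_z + (φ/conj(φ)) conj(φ_z) ](x_0). -/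
/-!
Write `A = u_xx`, `B = u_xy = u_yx`, `C = u_yy` and `∇u = (a, b)` at `x₀`. Differentiating
`φ = (a - i b)/2` gives `φ_{z̄} = (A + C)/4 = Δu/4` and `φ_z = (A - C - 2iB)/4`. The bracket on the
right is `w + w̄ = 2 Re w` for `w = (φ̄/φ) φ_z`, i.e. `2 Re(φ̄² φ_z)/|φ|²`, which works out to
`⟨D²u ∇u, ∇u⟩/|∇u|² - Δu/2`. The `p`-harmonic equation expresses `⟨D²u ∇u, ∇u⟩/|∇u|²` through
`Δu`, and the identity becomes linear arithmetic in `Δu`.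
-/

open Real

noncomputable section

/-- Partial derivative of `u : ℝ² → ℝ` in the `x`-direction. -/
def ux (u : ℝ × ℝ → ℝ) (x : ℝ × ℝ) : ℝ := fderiv ℝ u x (1, 0)

/-- Partial derivative of `u : ℝ² → ℝ` in the `y`-direction. -/
def uy (u : ℝ × ℝ → ℝ) (x : ℝ × ℝ) : ℝ := fderiv ℝ u x (0, 1)

/-- The complex gradient `φ = ∂u/∂z = (u_x - i u_y)/2` of `u : ℝ² → ℝ`. -/
def complexGradient (u : ℝ × ℝ → ℝ) (x : ℝ × ℝ) : ℂ :=
  ((ux u x : ℂ) - Complex.I * (uy u x : ℂ)) / 2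

/-- The Wirtinger derivative `∂φ/∂z = (φ_x - i φ_y)/2` of `φ : ℝ² → ℂ`. -/
def wirtingerZ (φ : ℝ × ℝ → ℂ) (x : ℝ × ℝ) : ℂ :=
  (fderiv ℝ φ x (1, 0) - Complex.I * fderiv ℝ φ x (0, 1)) / 2

/-- The Wirtinger derivative `∂φ/∂z̄ = (φ_x + i φ_y)/2` of `φ : ℝ² → ℂ`. -/
def wirtingerZBar (φ : ℝ × ℝ → ℂ) (x : ℝ × ℝ) : ℂ :=
  (fderiv ℝ φ x (1, 0) + Complex.I * fderiv ℝ φ x (0, 1)) / 2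

/-- The second derivative `D²u(x)[v,w]` of `u : ℝ² → ℝ`. -/
def secondDeriv (u : ℝ × ℝ → ℝ) (x v w : ℝ × ℝ) : ℝ :=
  fderiv ℝ (fderiv ℝ u) x v w

/-- `u` is classically `p`-harmonic at `x₀` (where `∇u(x₀) ≠ 0`):
`Δu(x₀) + (p-2) ⟨D²u(x₀) ∇u(x₀), ∇u(x₀)⟩ / |∇u(x₀)|² = 0`. -/
def ClassicallyPHarmonicAt (p : ℝ) (u : ℝ × ℝ → ℝ) (x₀ : ℝ × ℝ) : Prop :=
  (secondDeriv u x₀ (1, 0) (1, 0) + secondDeriv u x₀ (0, 1) (0, 1)) +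
    (p - 2) * secondDeriv u x₀ (ux u x₀, uy u x₀) (ux u x₀, uy u x₀) /
      ((ux u x₀) ^ 2 + (uy u x₀) ^ 2) = 0

open Complex ComplexConjugate Filter Topology

theorem conj_div_mul_add_div_conj_mul (φ w : ℂ) :
    conj φ / φ * w + φ / conj φ * conj w = ((2 * (conj φ ^ 2 * w).re / normSq φ : ℝ) : ℂ) := by
  have hconj : φ / conj φ * conj w = conj (conj φ / φ * w) := by
    rw [map_mul, map_div₀, conj_conj]
  have hre : (conj φ / φ * w).re = (conj φ ^ 2 * w).re / normSq φ := by
    rw [div_eq_mul_inv, inv_def, ← mul_assoc, mul_comm _ (conj φ), ← pow_two, mul_assoc,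
      mul_comm _ w, ← mul_assoc, re_mul_ofReal, div_eq_mul_inv]
  rw [hconj, add_conj, hre, mul_div_assoc]

theorem secondDeriv_apply_prod (u : ℝ × ℝ → ℝ) (x : ℝ × ℝ) (a b : ℝ) :
    secondDeriv u x (a, b) (a, b) =
      a ^ 2 * secondDeriv u x (1, 0) (1, 0) +
        a * b * (secondDeriv u x (1, 0) (0, 1) + secondDeriv u x (0, 1) (1, 0)) +
        b ^ 2 * secondDeriv u x (0, 1) (0, 1) := by
  have hab : ((a, b) : ℝ × ℝ) = a • ((1 : ℝ), (0 : ℝ)) + b • ((0 : ℝ), (1 : ℝ)) := by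
    simp
  rw [hab]
  simp only [secondDeriv, map_add, map_smul, add_apply, smul_apply, smul_eq_mul]
  ring

theorem secondDeriv_comm {u : ℝ × ℝ → ℝ} {x : ℝ × ℝ}
    (hu : ∀ᶠ y in 𝓝 x, DifferentiableAt ℝ u y) (hu' : DifferentiableAt ℝ (fderiv ℝ u) x)
    (v w : ℝ × ℝ) : secondDeriv u x v w = secondDeriv u x w v :=
  second_derivative_symmetric_of_eventually (hu.mono fun _ hy ↦ hy.hasFDerivAt)
    hu'.hasFDerivAt v w

theorem complexGradient_ne_zero {u : ℝ × ℝ → ℝ} {x : ℝ × ℝ}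
    (hgrad : (ux u x, uy u x) ≠ (0, 0)) : complexGradient u x ≠ 0 := by
  intro h
  apply hgrad
  have hre := congrArg Complex.re h
  have him := congrArg Complex.im h
  simp only [complexGradient, div_re, div_im, sub_re, sub_im, mul_re, mul_im, I_re, I_im,
    ofReal_re, ofReal_im, zero_re, zero_im] at hre him
  norm_num at hre him
  rw [hre, him]

theorem normSq_complexGradient (u : ℝ × ℝ → ℝ) (x : ℝ × ℝ) :
    normSq (complexGradient u x) = (ux u x ^ 2 + uy u x ^ 2) / 4 := by
  simp only [complexGradient, normSq_apply, div_re, div_im, sub_re, sub_im, mul_re, mul_im,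
    I_re, I_im, ofReal_re, ofReal_im]
  norm_num
  ring

theorem fderiv_complexGradient_apply {u : ℝ × ℝ → ℝ} {x : ℝ × ℝ}
    (hu' : DifferentiableAt ℝ (fderiv ℝ u) x) (v : ℝ × ℝ) :
    fderiv ℝ (complexGradient u) x v =
      ((secondDeriv u x v (1, 0) : ℂ) - I * (secondDeriv u x v (0, 1) : ℂ)) / 2 := by
  have hpartial (w : ℝ × ℝ) : HasFDerivAt (fun y ↦ ((fderiv ℝ u y w : ℝ) : ℂ))
      (ofRealCLM.comp ((ContinuousLinearMap.apply ℝ ℝ w).comp (fderiv ℝ (fderiv ℝ u) x))) x :=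
    ofRealCLM.hasFDerivAt.comp x
      ((ContinuousLinearMap.apply ℝ ℝ w).hasFDerivAt.comp x hu'.hasFDerivAt)
  have hd : HasFDerivAt (complexGradient u) _ x :=
    ((hpartial (1, 0)).sub ((hpartial (0, 1)).const_mul I)).mul_const 2⁻¹
  rw [hd.fderiv]
  simp [secondDeriv, div_eq_inv_mul]

section Wirtinger

variable {u : ℝ × ℝ → ℝ} {x : ℝ × ℝ} (hu' : DifferentiableAt ℝ (fderiv ℝ u) x)
  (hsymm : secondDeriv u x (0, 1) (1, 0) = secondDeriv u x (1, 0) (0, 1))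
include hu' hsymm

theorem wirtingerZBar_complexGradient :
    wirtingerZBar (complexGradient u) x =
      ((secondDeriv u x (1, 0) (1, 0) + secondDeriv u x (0, 1) (0, 1) : ℝ) : ℂ) / 4 := by
  rw [wirtingerZBar, fderiv_complexGradient_apply hu', fderiv_complexGradient_apply hu', hsymm]
  push_cast
  linear_combination (-(secondDeriv u x (0, 1) (0, 1) : ℂ) / 4) * I_sq

theorem wirtingerZ_complexGradient :
    wirtingerZ (complexGradient u) x =
      (((secondDeriv u x (1, 0) (1, 0) - secondDeriv u x (0, 1) (0, 1) : ℝ) : ℂ) -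
        2 * I * (secondDeriv u x (1, 0) (0, 1) : ℂ)) / 4 := by
  rw [wirtingerZ, fderiv_complexGradient_apply hu', fderiv_complexGradient_apply hu', hsymm]
  push_cast
  linear_combination ((secondDeriv u x (0, 1) (0, 1) : ℂ) / 4) * I_sq

end Wirtinger

theorem re_conj_sq_mul_of_coords (a b A C B : ℝ) :
    (conj (((a : ℂ) - I * b) / 2) ^ 2 * ((((A - C : ℝ) : ℂ) - 2 * I * B) / 4)).re =
      ((a ^ 2 - b ^ 2) * (A - C) + 4 * a * b * B) / 16 := by
  simp only [map_div₀, map_sub, map_mul, conj_ofReal, conj_I, map_ofNat, pow_two,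
    div_ofNat_re, div_ofNat_im, mul_re, mul_im, sub_re, sub_im, neg_re, neg_im, I_re, I_im,
    ofReal_re, ofReal_im, re_ofNat, im_ofNat]
  ring

theorem add_div_four_eq_of_pHarmonic {p a b A B C : ℝ} (hp : p ≠ 0) (hab : a ^ 2 + b ^ 2 ≠ 0)
    (hpde : A + C + (p - 2) * (a ^ 2 * A + 2 * a * b * B + b ^ 2 * C) / (a ^ 2 + b ^ 2) = 0) :
    (A + C) / 4 =
      (1 / p - 1 / 2) * (2 * (((a ^ 2 - b ^ 2) * (A - C) + 4 * a * b * B) / 16) /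
        ((a ^ 2 + b ^ 2) / 4)) := by
  field_simp at hpde ⊢
  linear_combination 32 * hpde

/-- **The complex-gradient equation** (Section 2).
If `u : U → ℝ` (`U ⊂ ℝ²` open) is twice differentiable at `x₀ ∈ U` with
`∇u(x₀) ≠ 0` and is classically `p`-harmonic at `x₀`, then the complex
gradient `φ = (u_x - i u_y)/2` satisfies `φ(x₀) ≠ 0` and
`φ_{z̄} = (1/p - 1/2) [ (φ̄/φ) φ_z + (φ/φ̄) φ̄_z ]` at `x₀`. -/
theorem complex_gradient_equation (p : ℝ) (hp : 2 < p)
    (U : Set (ℝ × ℝ)) (hU : IsOpen U) (x₀ : ℝ × ℝ) (hx₀ : x₀ ∈ U)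
    (u : ℝ × ℝ → ℝ)
    (hdiff : ∀ x ∈ U, DifferentiableAt ℝ u x)
    (hdiff2 : DifferentiableAt ℝ (fderiv ℝ u) x₀)
    (hgrad : (ux u x₀, uy u x₀) ≠ (0, 0))
    (hpde : ClassicallyPHarmonicAt p u x₀) :
    complexGradient u x₀ ≠ 0 ∧
    wirtingerZBar (complexGradient u) x₀ =
      ((1 / p - 1 / 2 : ℝ) : ℂ) *
        ((starRingEnd ℂ (complexGradient u x₀) / complexGradient u x₀) *
            wirtingerZ (complexGradient u) x₀ +
          (complexGradient u x₀ / starRingEnd ℂ (complexGradient u x₀)) *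
            starRingEnd ℂ (wirtingerZ (complexGradient u) x₀)) := by
  have hφ := complexGradient_ne_zero hgrad
  have hsymm := secondDeriv_comm (eventually_of_mem (hU.mem_nhds hx₀) hdiff) hdiff2
  have hnormSq : ux u x₀ ^ 2 + uy u x₀ ^ 2 ≠ 0 := by
    have h := normSq_pos.2 hφ
    rw [normSq_complexGradient] at h
    linarith
  refine ⟨hφ, ?_⟩
  rw [ClassicallyPHarmonicAt, secondDeriv_apply_prod u x₀ (ux u x₀), hsymm (0, 1) (1, 0)] at hpde
  rw [wirtingerZBar_complexGradient hdiff2 (hsymm _ _), conj_div_mul_add_div_conj_mul,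
    wirtingerZ_complexGradient hdiff2 (hsymm _ _), normSq_complexGradient, complexGradient,
    re_conj_sq_mul_of_coords]
  exact_mod_cast add_div_four_eq_of_pHarmonic (zero_lt_two.trans hp).ne' hnormSq (by linear_combination hpde)
end
end

section
/- For every p > 2, define α*(2,p) := (1/6) ( p/(p-1) + sqrt( 1 + 14/(p-1) + 1/(p-1)² ) ) and α(p) := (1/(2p)) ( −3 − 1/(p-1) + sqrt( 33 + 30/(p-1) + 1/(p-1)² ) ). Then the strict inequalities α*(2,p) > α(p) > 1/(p-1) hold. -/
open Real

/-!
With `A = p² + 12p - 12` and `B = 33p² - 36p + 4`, clearing denominators gives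
`α*(2,p) = (p + √A) / (6(p-1))` and `α(p) = (√B - 3p + 2) / (2p(p-1))`.
Then `α(p) > 1/(p-1)` is `√B > 5p - 2`, i.e. `8p(p-2) > 0`. The two exponents coincide at
`p = 2`, so `α*(2,p) > α(p)` needs estimates that are sharp there: the tangent line of the
concave `√B`, `√B < 6p - 4` (the gap of the squares is `3(p-2)²`), and
`p √A ≥ -p² + 9p - 6` (the gap of the squares is `3(p-2)(10p² - 15p + 6)`).
Together they give `3√B < p² + p√A + 9p - 6`.
-/

theorem Real.sqrt_add_div_add_div_sq (a b c : ℝ) {s : ℝ} (hs : 0 < s) :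
    √(a + b / s + c / s ^ 2) = √(a * s ^ 2 + b * s + c) / s := by
  have h : a + b / s + c / s ^ 2 = (a * s ^ 2 + b * s + c) / s ^ 2 := by
    field_simp
  rw [h, sqrt_div' _ (sq_nonneg s), sqrt_sq hs.le]

/-- The Iwaniec–Manfredi exponent `α*(2,p)`. -/
noncomputable def iwaniecManfrediExponent (p : ℝ) : ℝ :=
  (1 / 6) * (p / (p - 1) + √(1 + 14 / (p - 1) + 1 / (p - 1) ^ 2))

/-- The Baernstein–Kovalev exponent `α(p)`. -/
noncomputable def baernsteinKovalevExponent (p : ℝ) : ℝ :=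
  (1 / (2 * p)) * (-3 - 1 / (p - 1) + √(33 + 30 / (p - 1) + 1 / (p - 1) ^ 2))

section

variable {p : ℝ}

theorem iwaniecManfrediExponent_eq (hp : 1 < p) :
    iwaniecManfrediExponent p = (p + √(p ^ 2 + 12 * p - 12)) / (6 * (p - 1)) := by
  have hp₁ : 0 < p - 1 := by linarith
  rw [iwaniecManfrediExponent, sqrt_add_div_add_div_sq _ _ _ hp₁]
  field_simp
  ring_nf

theorem baernsteinKovalevExponent_eq (hp : 1 < p) :
    baernsteinKovalevExponent p = (√(33 * p ^ 2 - 36 * p + 4) - 3 * p + 2) / (2 * p * (p - 1)) := by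
  have hp₁ : 0 < p - 1 := by linarith
  rw [baernsteinKovalevExponent, sqrt_add_div_add_div_sq _ _ _ hp₁]
  field_simp
  ring_nf

theorem five_mul_sub_two_lt_sqrt (hp : 2 < p) : 5 * p - 2 < √(33 * p ^ 2 - 36 * p + 4) :=
  lt_sqrt_of_sq_lt (by nlinarith)

theorem sqrt_lt_six_mul_sub_four (hp : 2 / 3 < p) (hp₂ : p ≠ 2) :
    √(33 * p ^ 2 - 36 * p + 4) < 6 * p - 4 := by
  have hgap : 0 < 3 * (p - 2) ^ 2 := by
    have := sub_ne_zero.mpr hp₂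
    positivity
  rw [sqrt_lt' (by linarith)]
  linarith

theorem le_mul_sqrt (hp : 2 ≤ p) : -p ^ 2 + 9 * p - 6 ≤ p * √(p ^ 2 + 12 * p - 12) := by
  have hgap : 0 ≤ 3 * (p - 2) * (10 * p ^ 2 - 15 * p + 6) := by
    have : 0 ≤ p - 2 := by linarith
    have : 0 < 10 * p ^ 2 - 15 * p + 6 := by nlinarith [sq_nonneg (4 * p - 3)]
    positivity
  calc -p ^ 2 + 9 * p - 6 ≤ √(p ^ 2 * (p ^ 2 + 12 * p - 12)) := le_sqrt_of_sq_le (by linarith)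
    _ = p * √(p ^ 2 + 12 * p - 12) := by
      rw [sqrt_mul (sq_nonneg p), sqrt_sq (by linarith)]

theorem one_div_lt_baernsteinKovalevExponent (hp : 2 < p) :
    1 / (p - 1) < baernsteinKovalevExponent p := by
  have hp₁ : 0 < p - 1 := by linarith
  rw [baernsteinKovalevExponent_eq (by linarith), lt_div_iff₀ (by positivity)]
  have hlhs : 1 / (p - 1) * (2 * p * (p - 1)) = 2 * p := by field_simp
  linarith [five_mul_sub_two_lt_sqrt hp]

theorem baernsteinKovalevExponent_lt_iwaniecManfrediExponent (hp : 2 < p) :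
    baernsteinKovalevExponent p < iwaniecManfrediExponent p := by
  have hp₁ : 0 < p - 1 := by linarith
  rw [baernsteinKovalevExponent_eq (by linarith), iwaniecManfrediExponent_eq (by linarith),
    div_lt_div_iff₀ (by positivity) (by positivity)]
  have key : 3 * √(33 * p ^ 2 - 36 * p + 4) < p ^ 2 + p * √(p ^ 2 + 12 * p - 12) + 9 * p - 6 := by
    linarith [sqrt_lt_six_mul_sub_four (by linarith) hp.ne', le_mul_sqrt hp.le]
  linear_combination 2 * (p - 1) * key

end

/-- **Comparison of the Hölder exponents** (inequality (2.4) / \eqref{alfi}).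
For every `p > 2`, with
`α*(2,p) = (1/6)(p/(p-1) + √(1 + 14/(p-1) + 1/(p-1)²))` the Iwaniec–Manfredi
exponent and
`α(p) = (1/(2p))(-3 - 1/(p-1) + √(33 + 30/(p-1) + 1/(p-1)²))` the
Baernstein–Kovalev exponent, one has `α*(2,p) > α(p) > 1/(p-1)`. -/
theorem exponent_comparison (p : ℝ) (hp : 2 < p) :
    (1 / 6) * (p / (p - 1) + Real.sqrt (1 + 14 / (p - 1) + 1 / (p - 1) ^ 2)) >
      (1 / (2 * p)) *
        (-3 - 1 / (p - 1) + Real.sqrt (33 + 30 / (p - 1) + 1 / (p - 1) ^ 2)) ∧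
    (1 / (2 * p)) *
        (-3 - 1 / (p - 1) + Real.sqrt (33 + 30 / (p - 1) + 1 / (p - 1) ^ 2)) >
      1 / (p - 1) :=
  ⟨baernsteinKovalevExponent_lt_iwaniecManfrediExponent hp,
    one_div_lt_baernsteinKovalevExponent hp⟩
end
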